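/- For every integer n ≥ 1, the recurrence coefficients and auxiliary quantities satisfy r_n(t)·(r_n(t) − t) = β_n(t) R_n(t) R_{n−1}(t). -/

import Mathlib

open MeasureTheory Real Filter

/-- The singularly perturbed Laguerre-type weight `w(x;t) = x^λ e^{-x² - t/x}` on `(0,∞)`. -/
noncomputable def weight (lam t x : ℝ) : ℝ := x ^ lam * Real.exp (-x ^ 2 - t / x)

/-- The system of monic orthogonal polynomials with respect to the weight
`w(x;t) = x^λ e^{-x² - t/x}` on `(0,∞)` (for every `t > 0`), together with the
normalization constants `h n t` and the recurrence coefficients `α n t`, `β n t`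
of the three-term recurrence `x Pₙ = Pₙ₊₁ + αₙ Pₙ + βₙ Pₙ₋₁`, `P₀ = 1`, `β₀ P₋₁ = 0`. -/
structure SingLaguerreOPS (lam : ℝ) : Type where
  P : ℕ → ℝ → Polynomial ℝ
  h : ℕ → ℝ → ℝ
  α : ℕ → ℝ → ℝ
  β : ℕ → ℝ → ℝ
  /-- all moments `∫₀^∞ x^k w(x;t) dx`, `k ∈ ℤ`, converge -/
  moments : ∀ (k : ℤ) (t : ℝ), 0 < t →
    IntegrableOn (fun x : ℝ => x ^ k * weight lam t x) (Set.Ioi (0:ℝ))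
  monic : ∀ n t, 0 < t → (P n t).Monic
  natDegree_eq : ∀ n t, 0 < t → (P n t).natDegree = n
  h_pos : ∀ n t, 0 < t → 0 < h n t
  orth : ∀ m n t, 0 < t →
    ∫ x in Set.Ioi (0:ℝ), (P m t).eval x * (P n t).eval x * weight lam t x
      = if m = n then h n t else 0
  P_zero : ∀ t, 0 < t → P 0 t = 1
  recur : ∀ n t, 0 < t →
    Polynomial.X * P n t
      = P (n+1) t + Polynomial.C (α n t) * P n t
        + Polynomial.C (β n t) * (if n = 0 then 0 else P (n-1) t)

/-- The auxiliary quantity `Rₙ(t) = (t/hₙ) ∫₀^∞ y⁻¹ Pₙ(y)² w(y;t) dy`. -/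
noncomputable def Rn (lam : ℝ) (S : SingLaguerreOPS lam) (n : ℕ) (t : ℝ) : ℝ :=
  t / S.h n t * ∫ y in Set.Ioi (0:ℝ), ((S.P n t).eval y) ^ 2 * weight lam t y / y

/-- The auxiliary quantity `rₙ(t) = (t/hₙ₋₁) ∫₀^∞ y⁻¹ Pₙ(y) Pₙ₋₁(y) w(y;t) dy`
(with the convention `P₋₁ = 0`, so `r₀ = 0`). -/
noncomputable def rn (lam : ℝ) (S : SingLaguerreOPS lam) (n : ℕ) (t : ℝ) : ℝ :=
  t / S.h (n-1) t *
    ∫ y in Set.Ioi (0:ℝ),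
      (S.P n t).eval y * (if n = 0 then 0 else (S.P (n-1) t).eval y) * weight lam t y / y

/-- The derivative `v'(z) = 2z - λ/z - t/z²` of the potential `v(z) = z² + t/z - λ ln z`. -/
noncomputable def vprime (lam t z : ℝ) : ℝ := 2 * z - lam / z - t / z ^ 2

/-!
Writing `p = x · p.divX + p(0)` splits `∫ p Pₘ w/x` into `∫ p.divX Pₘ w + p(0) ∫ Pₘ w/x`, and by
orthogonality the first term is `hₘ` times the coefficient of `xᵐ` in `p.divX`. With
`cₖ = ∫ Pₖ w/x` this gives `∫ Pₙ Pₙ₋₁ w/x = hₙ₋₁ + Pₙ(0) cₙ₋₁ = Pₙ₋₁(0) cₙ` and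
`∫ Pₖ² w/x = Pₖ(0) cₖ`, so `rₙ = (t/hₙ₋₁) Pₙ₋₁(0) cₙ` and `rₙ - t = (t/hₙ₋₁) Pₙ(0) cₙ₋₁`.
The identity then reduces to `βₙ = hₙ / hₙ₋₁`, which follows from the recurrence by computing
`∫ x Pₙ Pₙ₋₁ w` in two ways.
-/

open Polynomial Set

lemma integrableOn_eval_mul_zpow_mul_weight {lam t : ℝ}
    (hm : ∀ k : ℤ, IntegrableOn (fun x : ℝ => x ^ k * weight lam t x) (Ioi 0))
    (p : ℝ[X]) (k : ℤ) :
    IntegrableOn (fun x : ℝ => p.eval x * (x ^ k * weight lam t x)) (Ioi 0) := by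
  induction p using Polynomial.induction_on' with
  | add p q hp hq =>
    simp only [eval_add, add_mul]
    exact Integrable.add hp hq
  | monomial i a =>
    refine IntegrableOn.congr_fun ((hm (i + k)).const_mul a) (fun x hx => ?_) measurableSet_Ioi
    simp only [eval_monomial, zpow_add₀ (ne_of_gt (mem_Ioi.mp hx)), zpow_natCast]
    ring

namespace SingLaguerreOPS

variable {lam t : ℝ} (S : SingLaguerreOPS lam) (ht : 0 < t)

noncomputable def momentFunctional (k : ℤ) : ℝ[X] →ₗ[ℝ] ℝ where
  toFun p := ∫ x in Ioi 0, p.eval x * (x ^ k * weight lam t x)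
  map_add' p q := by
    simp only [eval_add, add_mul]
    exact integral_add (integrableOn_eval_mul_zpow_mul_weight (S.moments · t ht) p k)
      (integrableOn_eval_mul_zpow_mul_weight (S.moments · t ht) q k)
  map_smul' c p := by
    simp only [eval_smul, smul_eq_mul, mul_assoc, RingHom.id_apply]
    exact integral_const_mul c _

lemma momentFunctional_apply (k : ℤ) (p : ℝ[X]) :
    S.momentFunctional ht k p = ∫ x in Ioi 0, p.eval x * (x ^ k * weight lam t x) := rfl

lemma momentFunctional_X_mul (k : ℤ) (p : ℝ[X]) :
    S.momentFunctional ht k (X * p) = S.momentFunctional ht (k + 1) p := by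
  refine setIntegral_congr_fun measurableSet_Ioi fun x hx => ?_
  simp only [eval_mul, eval_X, zpow_add_one₀ (ne_of_gt (mem_Ioi.mp hx))]
  ring

lemma momentFunctional_zero_P_mul_P (m n : ℕ) :
    S.momentFunctional ht 0 (S.P m t * S.P n t) = if m = n then S.h n t else 0 := by
  rw [← S.orth m n t ht, momentFunctional_apply]
  refine setIntegral_congr_fun measurableSet_Ioi fun x _ => ?_
  simp only [eval_mul, zpow_zero, one_mul, mul_assoc]

lemma coeff_P_of_le (ht : 0 < t) {d m : ℕ} (hdm : d ≤ m) :
    (S.P d t).coeff m = if d = m then 1 else 0 := by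
  split_ifs with h
  · subst h
    simpa [Monic, leadingCoeff, S.natDegree_eq d t ht] using S.monic d t ht
  · exact coeff_eq_zero_of_natDegree_lt (by rw [S.natDegree_eq d t ht]; omega)

lemma momentFunctional_zero_mul_P {m : ℕ} (q : ℝ[X]) (hq : q.natDegree ≤ m) :
    S.momentFunctional ht 0 (q * S.P m t) = q.coeff m * S.h m t := by
  suffices key : ∀ d ≤ m + 1, ∀ q : ℝ[X], q.degree < d →
      S.momentFunctional ht 0 (q * S.P m t) = q.coeff m * S.h m t from
    key (m + 1) le_rfl q (degree_lt_iff_coeff_zero _ _ |>.mpr fun k hk =>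
      coeff_eq_zero_of_natDegree_lt (by omega))
  intro d
  induction d with
  | zero =>
    intro _ q hq
    simp [degree_eq_bot.mp (by simpa using hq)]
  | succ d ih =>
    intro hd q hq
    set r := q - C (q.coeff d) * S.P d t with hr
    have hr_coeff : ∀ k, d ≤ k → r.coeff k = q.coeff k - q.coeff d * (if d = k then 1 else 0) :=
      fun k hk => by rw [hr, coeff_sub, coeff_C_mul, S.coeff_P_of_le ht hk]
    have hr_deg : r.degree < d := by
      refine (degree_lt_iff_coeff_zero _ _).mpr fun k hk => ?_
      rcases Nat.eq_or_lt_of_le hk with rfl | hlt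
      · simp [hr_coeff d le_rfl]
      · rw [hr_coeff k (Nat.le_of_lt hlt), if_neg hlt.ne,
          coeff_eq_zero_of_degree_lt (hq.trans_le (by exact_mod_cast hlt))]
        ring
    have hq_split : q * S.P m t = q.coeff d • (S.P d t * S.P m t) + r * S.P m t := by
      rw [hr, smul_eq_C_mul]
      ring
    rw [hq_split, map_add, map_smul, S.momentFunctional_zero_P_mul_P ht,
      ih (by omega) r hr_deg, hr_coeff m (by omega), smul_eq_mul]
    split_ifs <;> ring

lemma beta_succ_mul_h (ht : 0 < t) (m : ℕ) : S.β (m + 1) t * S.h m t = S.h (m + 1) t := by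
  have hrec := S.recur (m + 1) t ht
  simp only [Nat.add_one_ne_zero, if_false, Nat.add_sub_cancel] at hrec
  have hX : (X * S.P m t).coeff (m + 1) = 1 := by
    rw [coeff_X_mul, S.coeff_P_of_le ht le_rfl, if_pos rfl]
  have hdeg : (X * S.P m t).natDegree ≤ m + 1 :=
    natDegree_mul_le.trans (by rw [natDegree_X, S.natDegree_eq m t ht, add_comm])
  calc S.β (m + 1) t * S.h m t
      = S.momentFunctional ht 0 ((X * S.P (m + 1) t) * S.P m t) := by
        rw [hrec, add_mul, add_mul, map_add, map_add, mul_assoc, mul_assoc, ← smul_eq_C_mul,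
          ← smul_eq_C_mul, map_smul, map_smul]
        simp [S.momentFunctional_zero_P_mul_P ht, show m + 1 + 1 ≠ m by omega]
    _ = S.momentFunctional ht 0 ((X * S.P m t) * S.P (m + 1) t) := by rw [mul_right_comm]
    _ = S.h (m + 1) t := by rw [S.momentFunctional_zero_mul_P ht _ hdeg, hX, one_mul]

lemma momentFunctional_neg_one_mul_P {m : ℕ} (p : ℝ[X]) (hp : p.natDegree ≤ m + 1) :
    S.momentFunctional ht (-1) (p * S.P m t)
      = p.coeff (m + 1) * S.h m t + p.coeff 0 * S.momentFunctional ht (-1) (S.P m t) := by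
  have hdivX : p.divX.natDegree ≤ m := by
    rw [natDegree_divX_eq_natDegree_tsub_one]; omega
  conv_lhs => rw [← divX_mul_X_add p]
  rw [add_mul, ← smul_eq_C_mul, mul_comm _ X, mul_assoc, map_add, momentFunctional_X_mul,
    neg_add_cancel, S.momentFunctional_zero_mul_P ht _ hdivX, coeff_divX, map_smul, smul_eq_mul]

lemma momentFunctional_neg_one_P_mul_P {d m : ℕ} (hdm : d ≤ m + 1) :
    S.momentFunctional ht (-1) (S.P d t * S.P m t)
      = (if d = m + 1 then S.h m t else 0)
        + (S.P d t).coeff 0 * S.momentFunctional ht (-1) (S.P m t) := by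
  rw [S.momentFunctional_neg_one_mul_P ht _ (by rwa [S.natDegree_eq d t ht]),
    S.coeff_P_of_le ht hdm]
  split_ifs <;> ring

lemma Rn_eq (n : ℕ) :
    Rn lam S n t = t / S.h n t * S.momentFunctional ht (-1) (S.P n t * S.P n t) := by
  rw [Rn, momentFunctional_apply]
  congr 1
  refine setIntegral_congr_fun measurableSet_Ioi fun x _ => ?_
  simp only [eval_mul, zpow_neg_one]
  ring

lemma rn_succ_eq (m : ℕ) :
    rn lam S (m + 1) t = t / S.h m t * S.momentFunctional ht (-1) (S.P (m + 1) t * S.P m t) := by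
  rw [rn, momentFunctional_apply]
  congr 1
  refine setIntegral_congr_fun measurableSet_Ioi fun x _ => ?_
  simp only [Nat.add_one_ne_zero, if_false, Nat.add_sub_cancel, eval_mul, zpow_neg_one]
  ring

end SingLaguerreOPS

theorem statement7_general (lam t : ℝ) (ht : 0 < t)
    (S : SingLaguerreOPS lam) (n : ℕ) (hn : 1 ≤ n) :
    rn lam S n t * (rn lam S n t - t)
      = S.β n t * Rn lam S n t * Rn lam S (n-1) t := by
  obtain ⟨m, rfl⟩ := Nat.exists_eq_add_of_le' hn
  set c := fun k => S.momentFunctional ht (-1) (S.P k t)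
  have hPP : ∀ {d k : ℕ}, d ≤ k + 1 → S.momentFunctional ht (-1) (S.P d t * S.P k t)
      = (if d = k + 1 then S.h k t else 0) + (S.P d t).coeff 0 * c k :=
    S.momentFunctional_neg_one_P_mul_P ht
  have hrn : rn lam S (m + 1) t = t / S.h m t * ((S.P m t).coeff 0 * c (m + 1)) := by
    rw [S.rn_succ_eq ht, mul_comm (S.P _ t), hPP (by omega), if_neg (by omega), zero_add]
  have hrn_sub : rn lam S (m + 1) t - t = t / S.h m t * ((S.P (m + 1) t).coeff 0 * c m) := by
    rw [S.rn_succ_eq ht, hPP le_rfl, if_pos rfl]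
    field_simp [(S.h_pos m t ht).ne']
    ring
  rw [hrn_sub, hrn, Nat.add_sub_cancel, S.Rn_eq ht, S.Rn_eq ht, hPP (by omega), hPP (by omega),
    if_neg (by omega), if_neg (by omega), zero_add, zero_add,
    eq_div_of_mul_eq (S.h_pos m t ht).ne' (S.beta_succ_mul_h ht m)]
  field_simp [(S.h_pos m t ht).ne', (S.h_pos (m + 1) t ht).ne']

theorem statement7 (lam t : ℝ) (hlam : 0 ≤ lam) (ht : 0 < t)
    (S : SingLaguerreOPS lam) (n : ℕ) (hn : 1 ≤ n) :
    rn lam S n t * (rn lam S n t - t)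
      = S.β n t * Rn lam S n t * Rn lam S (n-1) t :=
  statement7_general lam t ht S n hn
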